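/- arXiv:2107.13184 — 3 statements merged into one kernel-verified Lean document; each statement's English description precedes it below -/
import Mathlib

section
/- For all c > 0, Δx > 0 and k ∈ ℝ, the numerical dispersion error satisfies the expansion with explicit remainder bound |ε_{c,Δx}(k) − (c·k³·Δx²/24 − c·k⁵·Δx⁴/1920)| ≤ c·|k|⁷·Δx⁶/322560. -/
/-!
With `x = kΔx/2`, the error `ε` minus its claimed expansion is
`(2c/Δx)·(x - x³/6 + x⁵/120 - sin x)`, so the bound is the degree-5 Taylor remainder estimate
`|sin x - (x - x³/6 + x⁵/120)| ≤ |x|⁷/7!`, valid for all real `x`. Such estimates hold for every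
order: starting from `|cos x| ≤ 1`, integrating an estimate `|g'| ≤ |t|ⁿ/n!` for a function `g`
vanishing at `0` gives `|g x| ≤ |x|ⁿ⁺¹/(n+1)!`, and the remainders of sine and cosine are, up to
sign, derivatives of one another.
-/

open Real Nat Finset

lemma hasDerivAt_pow_succ_div_factorial (n : ℕ) (t : ℝ) :
    HasDerivAt (fun t : ℝ => t ^ (n + 1) / (n + 1)!) (t ^ n / n !) t := by
  refine ((hasDerivAt_pow (n + 1) t).div_const _).congr_deriv ?_
  rw [Nat.factorial_succ]
  push_cast
  field_simp

lemma abs_le_pow_div_factorial_of_nonneg {f f' : ℝ → ℝ} {n : ℕ}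
    (hf : ∀ t, HasDerivAt f (f' t) t) (hf0 : f 0 = 0)
    (hf' : ∀ t, 0 ≤ t → |f' t| ≤ t ^ n / n !) {x : ℝ} (hx : 0 ≤ x) :
    |f x| ≤ x ^ (n + 1) / (n + 1)! :=
  image_norm_le_of_norm_deriv_right_le_deriv_boundary
    (fun t _ => (hf t).continuousAt.continuousWithinAt) (fun t _ => (hf t).hasDerivWithinAt)
    (by simp [hf0]) (hasDerivAt_pow_succ_div_factorial n) (fun t ht => hf' t ht.1)
    ⟨hx, le_rfl⟩

lemma abs_le_pow_div_factorial_of_hasDerivAt {f f' : ℝ → ℝ} {n : ℕ}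
    (hf : ∀ t, HasDerivAt f (f' t) t) (hf0 : f 0 = 0)
    (hf' : ∀ t, |f' t| ≤ |t| ^ n / n !) (x : ℝ) :
    |f x| ≤ |x| ^ (n + 1) / (n + 1)! := by
  rcases le_total 0 x with hx | hx
  · rw [abs_of_nonneg hx]
    exact abs_le_pow_div_factorial_of_nonneg hf hf0
      (fun t ht => by simpa [abs_of_nonneg ht] using hf' t) hx
  · have hreflect : ∀ t, HasDerivAt (fun s => f (-s)) (-f' (-t)) t := fun t =>
      mul_neg_one (f' (-t)) ▸ (hf (-t)).comp t (hasDerivAt_neg t)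
    have := abs_le_pow_div_factorial_of_nonneg hreflect (by simpa using hf0)
      (fun t ht => by simpa [abs_of_nonneg ht] using hf' (-t)) (neg_nonneg.mpr hx)
    rwa [neg_neg, ← abs_of_nonpos hx] at this

noncomputable def sinTaylor (n : ℕ) (x : ℝ) : ℝ :=
  ∑ j ∈ range n, (-1) ^ j * (x ^ (2 * j + 1) / (2 * j + 1)!)

noncomputable def cosTaylor (n : ℕ) (x : ℝ) : ℝ :=
  ∑ j ∈ range n, (-1) ^ j * (x ^ (2 * j) / (2 * j)!)

lemma hasDerivAt_sinTaylor (n : ℕ) (x : ℝ) : HasDerivAt (sinTaylor n) (cosTaylor n x) x := by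
  unfold sinTaylor cosTaylor
  exact HasDerivAt.fun_sum fun j _ => (hasDerivAt_pow_succ_div_factorial (2 * j) x).const_mul _

lemma cosTaylor_succ (n : ℕ) (x : ℝ) :
    cosTaylor (n + 1) x =
      1 - ∑ j ∈ range n, (-1) ^ j * (x ^ (2 * j + 1 + 1) / (2 * j + 1 + 1)!) := by
  rw [cosTaylor, sum_range_succ', sub_eq_neg_add, ← sum_neg_distrib]
  simp [pow_succ, mul_add]

lemma hasDerivAt_cosTaylor_succ (n : ℕ) (x : ℝ) :
    HasDerivAt (cosTaylor (n + 1)) (-sinTaylor n x) x := by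
  have := (hasDerivAt_const x (1 : ℝ)).fun_sub <| HasDerivAt.fun_sum (u := range n) fun j _ =>
    (hasDerivAt_pow_succ_div_factorial (2 * j + 1) x).const_mul ((-1 : ℝ) ^ j)
  rw [funext (cosTaylor_succ n)]
  simpa [sinTaylor] using this

lemma abs_sin_sub_sinTaylor_le_of_cos {n : ℕ}
    (hcos : ∀ x, |cos x - cosTaylor n x| ≤ |x| ^ (2 * n) / (2 * n)!) (x : ℝ) :
    |sin x - sinTaylor n x| ≤ |x| ^ (2 * n + 1) / (2 * n + 1)! :=
  abs_le_pow_div_factorial_of_hasDerivAt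
    (fun t => (hasDerivAt_sin t).fun_sub (hasDerivAt_sinTaylor n t))
    (by simp [sinTaylor]) hcos x

lemma abs_cos_sub_cosTaylor_le (n : ℕ) (x : ℝ) :
    |cos x - cosTaylor n x| ≤ |x| ^ (2 * n) / (2 * n)! := by
  induction n generalizing x with
  | zero => simpa [cosTaylor] using abs_cos_le_one x
  | succ n ih =>
    have hderiv (t : ℝ) :
        HasDerivAt (fun t => cos t - cosTaylor (n + 1) t) (-(sin t - sinTaylor n t)) t :=
      ((hasDerivAt_cos t).fun_sub (hasDerivAt_cosTaylor_succ n t)).congr_deriv (by ring)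
    have := abs_le_pow_div_factorial_of_hasDerivAt hderiv (by simp [cosTaylor_succ])
      (fun t => (abs_neg _).trans_le (abs_sin_sub_sinTaylor_le_of_cos ih t)) x
    rwa [show 2 * n + 1 + 1 = 2 * (n + 1) by ring] at this

lemma abs_sin_sub_sinTaylor_le (n : ℕ) (x : ℝ) :
    |sin x - sinTaylor n x| ≤ |x| ^ (2 * n + 1) / (2 * n + 1)! :=
  abs_sin_sub_sinTaylor_le_of_cos (abs_cos_sub_cosTaylor_le n) x

lemma sinTaylor_three (x : ℝ) : sinTaylor 3 x = x - x ^ 3 / 6 + x ^ 5 / 120 := by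
  simp [sinTaylor, sum_range_succ, Nat.factorial]
  ring

/-- The numerical dispersion error
`ε_{c,Δx}(k) = c k − (2c/Δx) sin(kΔx/2)` satisfies the expansion
`ε ≈ c k³ Δx²/24 − c k⁵ Δx⁴/1920` with remainder bounded by `c |k|⁷ Δx⁶ / 322560`. -/
theorem dispersion_error_expansion
    (c Δx k : ℝ) (hc : 0 < c) (hΔx : 0 < Δx) :
    |(c * k - (2 * c / Δx) * Real.sin (k * Δx / 2))
        - (c * k^3 * Δx^2 / 24 - c * k^5 * Δx^4 / 1920)|
      ≤ c * |k|^7 * Δx^6 / 322560 := by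
  set x := k * Δx / 2 with hx
  have hremainder : |sin x - (x - x ^ 3 / 6 + x ^ 5 / 120)| ≤ |x| ^ 7 / 5040 := by
    simpa [sinTaylor_three, Nat.factorial] using abs_sin_sub_sinTaylor_le 3 x
  have hscale : 0 < 2 * c / Δx := by positivity
  calc |(c * k - (2 * c / Δx) * sin x) - (c * k^3 * Δx^2 / 24 - c * k^5 * Δx^4 / 1920)|
      = |-(2 * c / Δx * (sin x - (x - x ^ 3 / 6 + x ^ 5 / 120)))| := by
        congr 1
        rw [hx]
        field_simp
        ring
    _ = 2 * c / Δx * |sin x - (x - x ^ 3 / 6 + x ^ 5 / 120)| := by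
        rw [abs_neg, abs_mul, abs_of_pos hscale]
    _ ≤ 2 * c / Δx * (|x| ^ 7 / 5040) := mul_le_mul_of_nonneg_left hremainder hscale.le
    _ = c * |k|^7 * Δx^6 / 322560 := by
        rw [hx, abs_div, abs_mul, abs_of_pos hΔx, abs_two]
        field_simp
        ring
end

section
/- For all a, b ∈ ℝ and ε ∈ [0, 1), every entry of the matrix R(a)·M(b,ε)⁻¹ − I₂ (where I₂ is the 2×2 identity matrix) has absolute value at most |a − b| + ε/(1−ε). In particular, when the phase error |a − b| and the relative dispersion error ε are small, the ideal correction operator is a near-identity map. -/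
/-!
`M(θ, ε)` has inverse `M(-θ, ε)` and differs from the rotation `R(θ)` only
off the diagonal, by `ε / (1 - ε) * sin θ` and `ε * sin θ`. Hence
`R(a) M(b, ε)⁻¹ - 1 = (R(a - b) - 1) + R(a) (M(-b, ε) - R(-b))`. The entries of the first term are
`cos (a - b) - 1` and `± sin (a - b)`, at most `|a - b|` in absolute value; those of the second are
products of a sine or cosine with an entry of `M(-b, ε) - R(-b)`, at most `ε / (1 - ε)` since
`ε ≤ ε / (1 - ε)`.
-/

open Real Matrix

noncomputable def rotMatrix (θ : ℝ) : Matrix (Fin 2) (Fin 2) ℝ :=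
  !![cos θ, sin θ; -sin θ, cos θ]

/-- The matrix `M(θ, ε)`. -/
noncomputable def dispersiveRotMatrix (θ ε : ℝ) : Matrix (Fin 2) (Fin 2) ℝ :=
  !![cos θ, sin θ / (1 - ε); -((1 - ε) * sin θ), cos θ]

theorem abs_cos_sub_one_le_abs (x : ℝ) : |cos x - 1| ≤ |x| := by
  simpa using abs_cos_sub_cos_le x 0

theorem abs_rotMatrix_sub_one_apply_le (θ : ℝ) (i j : Fin 2) :
    |(rotMatrix θ - 1) i j| ≤ |θ| := by
  fin_cases i <;> fin_cases j <;>
    simp [rotMatrix, abs_cos_sub_one_le_abs, abs_sin_le_abs]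

theorem rotMatrix_mul_rotMatrix (a b : ℝ) : rotMatrix a * rotMatrix b = rotMatrix (a + b) := by
  ext i j
  fin_cases i <;> fin_cases j <;>
    simp [rotMatrix, Matrix.mul_apply, cos_add, sin_add] <;> ring

theorem inv_dispersiveRotMatrix {ε : ℝ} (hε : ε ≠ 1) (θ : ℝ) :
    (dispersiveRotMatrix θ ε)⁻¹ = dispersiveRotMatrix (-θ) ε := by
  have h1ε : 1 - ε ≠ 0 := sub_ne_zero.mpr hε.symm
  refine Matrix.inv_eq_right_inv ?_
  ext i j
  fin_cases i <;> fin_cases j <;>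
    simp [dispersiveRotMatrix, Matrix.mul_apply] <;> field_simp <;>
    simp [sin_sq_add_cos_sq, cos_sq_add_sin_sq]

theorem dispersiveRotMatrix_sub_rotMatrix {ε : ℝ} (hε : ε ≠ 1) (θ : ℝ) :
    dispersiveRotMatrix θ ε - rotMatrix θ = !![0, ε / (1 - ε) * sin θ; ε * sin θ, 0] := by
  have h1ε : 1 - ε ≠ 0 := sub_ne_zero.mpr hε.symm
  ext i j
  fin_cases i <;> fin_cases j <;>
    simp [dispersiveRotMatrix, rotMatrix] <;> field_simp <;> ring

theorem abs_rotMatrix_mul_antidiagonal_apply_le {p q δ : ℝ} (hp : |p| ≤ δ) (hq : |q| ≤ δ)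
    (θ : ℝ) (i j : Fin 2) : |(rotMatrix θ * !![0, p; q, 0]) i j| ≤ δ := by
  have bound {c x : ℝ} (hc : |c| ≤ 1) (hx : |x| ≤ δ) : |c| * |x| ≤ δ := by
    nlinarith [abs_nonneg c, abs_nonneg x]
  fin_cases i <;> fin_cases j <;> simp [rotMatrix, Matrix.mul_apply] <;>
    exact bound (by simp [abs_sin_le_one, abs_cos_le_one]) (by assumption)

theorem abs_mul_sin_le {c : ℝ} (hc : 0 ≤ c) (x : ℝ) : |c * sin x| ≤ c := by
  rw [abs_mul, abs_of_nonneg hc]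
  exact mul_le_of_le_one_right hc (abs_sin_le_one x)

/-- For `a, b ∈ ℝ` and `ε ∈ [0,1)`, every entry of
`R(a) · M(b,ε)⁻¹ − I₂` has absolute value at most `|a − b| + ε/(1−ε)`:
the ideal correction operator is a near-identity map. -/
theorem ideal_correction_operator_near_identity
    (a b ε : ℝ) (hε0 : 0 ≤ ε) (hε1 : ε < 1) :
    ∀ i j : Fin 2,
      |((!![Real.cos a, Real.sin a; -Real.sin a, Real.cos a]) *
          (!![Real.cos b, Real.sin b / (1 - ε); -((1 - ε) * Real.sin b), Real.cos b])⁻¹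
        - (1 : Matrix (Fin 2) (Fin 2) ℝ)) i j|
      ≤ |a - b| + ε / (1 - ε) := by
  intro i j
  have hε : ε ≠ 1 := hε1.ne
  have hδ : 0 ≤ ε / (1 - ε) := div_nonneg hε0 (sub_pos.mpr hε1).le
  change |(rotMatrix a * (dispersiveRotMatrix b ε)⁻¹ - 1) i j| ≤ _
  have hsplit : rotMatrix a * (dispersiveRotMatrix b ε)⁻¹ - 1 =
      (rotMatrix (a - b) - 1) + rotMatrix a * (dispersiveRotMatrix (-b) ε - rotMatrix (-b)) := by
    rw [inv_dispersiveRotMatrix hε, mul_sub, rotMatrix_mul_rotMatrix, ← sub_eq_add_neg]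
    abel
  rw [hsplit, dispersiveRotMatrix_sub_rotMatrix hε, Matrix.add_apply]
  have hεδ : ε ≤ ε / (1 - ε) := le_div_self hε0 (sub_pos.mpr hε1) (sub_le_self _ hε0)
  exact (abs_add_le _ _).trans (add_le_add (abs_rotMatrix_sub_one_apply_le _ i j)
    (abs_rotMatrix_mul_antidiagonal_apply_le (abs_mul_sin_le hδ _)
      ((abs_mul_sin_le hε0 _).trans hεδ) a i j))
end

section
/- Let X be a normed vector space over ℝ, let F, G : X →L X be continuous linear maps, and set r := ‖G‖ and γ := ‖F − G‖ (operator norms). Let u : ℕ → X be the exact trajectory u(n+1) = F(u(n)), and for each k let u^k : ℕ → X satisfy the parareal iteration u^{k+1}(n+1) = G(u^{k+1}(n)) + F(u^k(n)) − G(u^k(n)) with u^k(0) = u(0) for all k. Then for every k and every N ≥ 1, the errors satisfy max_{0 ≤ n ≤ N} ‖u^{k+1}(n) − u(n)‖ ≤ γ · (∑_{j=0}^{N−1} r^j) · max_{0 ≤ n ≤ N−1} ‖u^k(n) − u(n)‖; when r ≠ 1 the factor ∑_{j=0}^{N−1} r^j equals (1 − r^N)/(1 − r). -/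
/-!
The error `e^k(n) = u^k(n) - u(n)` of the parareal iterates satisfies the linear recursion
`e^{k+1}(n+1) = G e^{k+1}(n) + (F - G) e^k(n)` with `e^{k+1}(0) = 0`, so
`‖e^{k+1}(n+1)‖ ≤ r ‖e^{k+1}(n)‖ + γ M`, where `M` bounds `‖e^k‖` on the previous steps.
Unrolling this affine inequality (a discrete Grönwall bound) gives
`‖e^{k+1}(n)‖ ≤ γ M ∑_{j<n} r^j`, and the geometric sum only grows with `n`.
-/

open Finset

theorem le_mul_geom_sum_of_le_mul_add {a : ℕ → ℝ} {r c : ℝ} (hr : 0 ≤ r) (h0 : a 0 ≤ 0)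
    {N : ℕ} (hstep : ∀ n < N, a (n + 1) ≤ r * a n + c) :
    ∀ n ≤ N, a n ≤ c * ∑ j ∈ range n, r ^ j := by
  intro n hn
  induction n with
  | zero => simpa using h0
  | succ n ih =>
    calc a (n + 1) ≤ r * a n + c := hstep n hn
      _ ≤ r * (c * ∑ j ∈ range n, r ^ j) + c := by gcongr; exact ih (by omega)
      _ = c * ∑ j ∈ range (n + 1), r ^ j := by rw [geom_sum_succ]; ring

section Parareal

variable {𝕜 X : Type*} [NontriviallyNormedField 𝕜] [NormedAddCommGroup X] [NormedSpace 𝕜 X]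
  {F G : X →L[𝕜] X} {u : ℕ → X} {uk : ℕ → ℕ → X}

theorem parareal_error_succ (hu : ∀ n, u (n + 1) = F (u n))
    (hiter : ∀ k n, uk (k + 1) (n + 1) = G (uk (k + 1) n) + F (uk k n) - G (uk k n))
    (k n : ℕ) :
    uk (k + 1) (n + 1) - u (n + 1) = G (uk (k + 1) n - u n) + (F - G) (uk k n - u n) := by
  rw [hiter, hu]
  simp only [sub_apply, map_sub]
  abel

theorem norm_parareal_error_succ_le (hu : ∀ n, u (n + 1) = F (u n))
    (hiter : ∀ k n, uk (k + 1) (n + 1) = G (uk (k + 1) n) + F (uk k n) - G (uk k n))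
    (k n : ℕ) :
    ‖uk (k + 1) (n + 1) - u (n + 1)‖ ≤
      ‖G‖ * ‖uk (k + 1) n - u n‖ + ‖F - G‖ * ‖uk k n - u n‖ := by
  rw [parareal_error_succ hu hiter]
  exact (norm_add_le _ _).trans (add_le_add (G.le_opNorm _) ((F - G).le_opNorm _))

end Parareal

/-- Parareal error amplification. With `F, G` continuous linear maps,
`r = ‖G‖`, `γ = ‖F − G‖`, exact trajectory `u(n+1) = F(u(n))` and parareal iterates
`u^{k+1}(n+1) = G(u^{k+1}(n)) + F(u^k(n)) − G(u^k(n))`, `u^k(0) = u(0)`, the max error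
over `0 ≤ n ≤ N` at iteration `k+1` is bounded by `γ (∑_{j<N} r^j)` times the max
error over `0 ≤ n ≤ N−1` at iteration `k`; and for `r ≠ 1` the factor
`∑_{j<N} r^j = (1 − r^N)/(1 − r)`. -/
theorem parareal_error_amplification
    {X : Type*} [NormedAddCommGroup X] [NormedSpace ℝ X]
    (F G : X →L[ℝ] X) (r γ : ℝ) (hr : r = ‖G‖) (hγ : γ = ‖F - G‖)
    (u : ℕ → X) (hu : ∀ n : ℕ, u (n + 1) = F (u n))
    (uk : ℕ → ℕ → X)
    (hinit : ∀ k : ℕ, uk k 0 = u 0)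
    (hiter : ∀ k n : ℕ,
      uk (k + 1) (n + 1) = G (uk (k + 1) n) + F (uk k n) - G (uk k n)) :
    ∀ k N : ℕ, 1 ≤ N →
      ((Finset.Icc 0 N).sup' (Finset.nonempty_Icc.mpr (Nat.zero_le N))
          (fun n => ‖uk (k + 1) n - u n‖))
        ≤ γ * (∑ j ∈ Finset.range N, r ^ j) *
          ((Finset.Icc 0 (N - 1)).sup' (Finset.nonempty_Icc.mpr (Nat.zero_le (N - 1)))
            (fun n => ‖uk k n - u n‖))
      ∧ (r ≠ 1 → (∑ j ∈ Finset.range N, r ^ j) = (1 - r ^ N) / (1 - r)) := by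
  intro k N hN
  subst hr hγ
  refine ⟨?_, fun hr1 => ?_⟩
  · set M := (Icc 0 (N - 1)).sup' (nonempty_Icc.mpr (Nat.zero_le (N - 1)))
      (fun n => ‖uk k n - u n‖)
    have hprev : ∀ n < N, ‖uk k n - u n‖ ≤ M := fun n hn =>
      le_sup' (fun n => ‖uk k n - u n‖) (mem_Icc.mpr ⟨n.zero_le, by omega⟩)
    have hgronwall := le_mul_geom_sum_of_le_mul_add (a := fun n => ‖uk (k + 1) n - u n‖)
      (c := ‖F - G‖ * M) (norm_nonneg G) (by simp [hinit]) fun n hn =>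
        (norm_parareal_error_succ_le hu hiter k n).trans (by gcongr; exact hprev n hn)
    refine sup'_le _ _ fun n hn => ?_
    have hnN := (mem_Icc.mp hn).2
    have hM0 : 0 ≤ M := (norm_nonneg _).trans (hprev 0 hN)
    calc ‖uk (k + 1) n - u n‖ ≤ ‖F - G‖ * M * ∑ j ∈ range n, ‖G‖ ^ j := hgronwall n hnN
      _ ≤ ‖F - G‖ * M * ∑ j ∈ range N, ‖G‖ ^ j := by gcongr
      _ = ‖F - G‖ * (∑ j ∈ range N, ‖G‖ ^ j) * M := by ring
  · rw [geom_sum_eq hr1, ← neg_sub (‖G‖ ^ N), ← neg_sub ‖G‖, neg_div_neg_eq]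
end
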